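/- Frequency localization of the total frequency: under the hypotheses of the tree frequency estimate (rooted tree on {1,…,n} given by p with p(v) < v, integers k_v satisfying conditions (i)–(iii), and reals ξ_v with k_v·ξ_v ≥ 0 and 2^{|k_v|−1} < |ξ_v| < 5·2^{|k_v|−1}), suppose in addition that K ∈ ℤ satisfies 2^{|K|−1} < |ξ_1 + ξ_2 + ⋯ + ξ_n| < 5·2^{|K|−1}. Then | |K| − |k_{w_max(1)}| | ≤ log₂(10 n), where w_max(1) is the maximal vertex of the tree. -/
import Mathlib


/-- `w` is a strict descendant of `v` in the tree with parent map `p`. -/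
def descends (p : ℕ → ℕ) (w v : ℕ) : Prop := ∃ k : ℕ, 0 < k ∧ p^[k] w = v

/-- The set of strict descendants of `v` among the vertices `{1,…,n}`. -/
noncomputable def descSet (n : ℕ) (p : ℕ → ℕ) (v : ℕ) : Finset ℕ :=
  letI := Classical.decPred fun w => descends p w v
  (Finset.Icc 1 n).filter fun w => descends p w v

/-- `w_max(v)`: the maximum of `{v} ∪ {w : w ↠ v}`. -/
noncomputable def wmax (n : ℕ) (p : ℕ → ℕ) (v : ℕ) : ℕ :=
  (insert v (descSet n p v)).max' (Finset.insert_nonempty _ _)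

/-- `v` is a leaf: no vertex has parent `v`. -/
def IsLeaf (n : ℕ) (p : ℕ → ℕ) (v : ℕ) : Prop := ¬ ∃ w, 2 ≤ w ∧ w ≤ n ∧ p w = v

/-- `v` is a node: at least two branches join at `v`. -/
def IsNode (n : ℕ) (p : ℕ → ℕ) (v : ℕ) : Prop :=
  ∃ w₁ w₂, w₁ ≠ w₂ ∧ 2 ≤ w₁ ∧ w₁ ≤ n ∧ p w₁ = v ∧ 2 ≤ w₂ ∧ w₂ ≤ n ∧ p w₂ = v

/-! ### Auxiliary definitions -/

/-- The children of `v` among `{2,…,n}`. -/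
def childrenF (n : ℕ) (p : ℕ → ℕ) (v : ℕ) : Finset ℕ :=
  (Finset.Icc 2 n).filter fun u => p u = v

/-- The subtree rooted at `v`: `v` together with its strict descendants. -/
noncomputable def subtreeF (n : ℕ) (p : ℕ → ℕ) (v : ℕ) : Finset ℕ :=
  insert v (descSet n p v)

lemma mem_descSet {n : ℕ} {p : ℕ → ℕ} {v w : ℕ} :
    w ∈ descSet n p v ↔ (1 ≤ w ∧ w ≤ n) ∧ descends p w v := by
  classical
  simp [descSet, Finset.mem_filter, Finset.mem_Icc]

lemma mem_subtreeF {n : ℕ} {p : ℕ → ℕ} {v w : ℕ} :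
    w ∈ subtreeF n p v ↔ w = v ∨ ((1 ≤ w ∧ w ≤ n) ∧ descends p w v) := by
  simp [subtreeF, Finset.mem_insert, mem_descSet]

lemma mem_childrenF {n : ℕ} {p : ℕ → ℕ} {v u : ℕ} :
    u ∈ childrenF n p v ↔ (2 ≤ u ∧ u ≤ n) ∧ p u = v := by
  simp [childrenF, Finset.mem_filter, Finset.mem_Icc]

lemma descends_trans {p : ℕ → ℕ} {a b c : ℕ} (h1 : descends p a b) (h2 : descends p b c) :
    descends p a c := by
  obtain ⟨i, hi, hia⟩ := h1
  obtain ⟨j, hj, hjb⟩ := h2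
  exact ⟨j + i, by omega, by rw [Function.iterate_add_apply, hia, hjb]⟩

lemma descends_child {p : ℕ → ℕ} {u v : ℕ} (h : p u = v) : descends p u v :=
  ⟨1, one_pos, by simpa using h⟩

section Tree

variable {n : ℕ} {p : ℕ → ℕ}
variable (hp : ∀ v, 2 ≤ v → v ≤ n → 1 ≤ p v ∧ p v < v) (hp0 : p 0 = 0) (hp1 : p 1 = 0)

include hp hp0 hp1

lemma iter_lt : ∀ j w, 1 ≤ w → w ≤ n → 1 ≤ j → p^[j] w < w := by
  intro j
  induction j with
  | zero => intro w _ _ h; omega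
  | succ j ih =>
    intro w h1 h2 _
    rcases Nat.lt_or_ge w 2 with hw | hw
    · have hw1 : w = 1 := by omega
      subst hw1
      rw [Function.iterate_succ_apply, hp1, Function.iterate_fixed hp0]
      omega
    · have hpw := hp w hw h2
      rcases Nat.eq_zero_or_pos j with hj | hj
      · subst hj; simpa using hpw.2
      · have := ih (p w) hpw.1 (by omega) hj
        rw [Function.iterate_succ_apply]; omega

lemma descends_lt {w v : ℕ} (h : descends p w v) (h1 : 1 ≤ w) (h2 : w ≤ n) : v < w := by
  obtain ⟨j, hj, hjw⟩ := h
  have := iter_lt hp hp0 hp1 j w h1 h2 hj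
  omega

lemma child_step {v w : ℕ} (h1v : 1 ≤ v) (h : descends p w v) (h1 : 1 ≤ w) (h2 : w ≤ n) :
    ∃ u, u ∈ childrenF n p v ∧ w ∈ subtreeF n p u := by
  obtain ⟨j, hj, hjw⟩ := h
  set u := p^[j - 1] w with hu
  have hpu : p u = v := by
    have hjj : j - 1 + 1 = j := by omega
    have hiter := Function.iterate_succ_apply' p (j - 1) w
    rw [Nat.succ_eq_add_one, hjj] at hiter
    rw [hu, ← hiter, hjw]
  have hun : u ≤ n := by
    rcases Nat.lt_or_ge j 2 with hj1 | hj2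
    · have : j = 1 := by omega
      simp [hu, this]; omega
    · have := iter_lt hp hp0 hp1 (j - 1) w h1 h2 (by omega)
      omega
  have hu2 : 2 ≤ u := by
    rcases Nat.lt_or_ge u 2 with hu1 | hu1
    · exfalso
      have : u = 0 ∨ u = 1 := by omega
      rcases this with h | h
      · rw [h, hp0] at hpu; omega
      · rw [h, hp1] at hpu; omega
    · exact hu1
  refine ⟨u, mem_childrenF.mpr ⟨⟨hu2, hun⟩, hpu⟩, ?_⟩
  rcases Nat.lt_or_ge j 2 with hj1 | hj2
  · have : j = 1 := by omega
    rw [mem_subtreeF]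
    left
    simp [hu, this]
  · rw [mem_subtreeF]
    right
    exact ⟨⟨h1, h2⟩, ⟨j - 1, by omega, rfl⟩⟩

lemma anc_unique {v u₁ u₂ w : ℕ} (h1v : 1 ≤ v) (hvn : v ≤ n)
    (hu₁ : u₁ ∈ childrenF n p v) (hu₂ : u₂ ∈ childrenF n p v)
    (hw₁ : w ∈ subtreeF n p u₁) (hw₂ : w ∈ subtreeF n p u₂)
    (h1w : 1 ≤ w) (hwn : w ≤ n) : u₁ = u₂ := by
  obtain ⟨⟨h2u₁, hu₁n⟩, hpu₁⟩ := mem_childrenF.mp hu₁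
  obtain ⟨⟨h2u₂, hu₂n⟩, hpu₂⟩ := mem_childrenF.mp hu₂
  have key : ∀ a b u₁' u₂' : ℕ, a ≤ b → p^[a] w = u₁' → p^[b] w = u₂' →
      2 ≤ u₁' → u₁' ≤ n → p u₁' = v → 2 ≤ u₂' → u₂' ≤ n → p u₂' = v → u₁' = u₂' := by
    intro a b u₁' u₂' hab ha hb h2u₁' hu₁n' hpu₁' h2u₂' hu₂n' hpu₂'
    have hb' : p^[b - a] u₁' = u₂' := by
      rw [← ha, ← Function.iterate_add_apply]
      rw [show b - a + a = b by omega, hb]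
    rcases Nat.eq_zero_or_pos (b - a) with hc | hc
    · rw [hc] at hb'; simpa using hb'
    · exfalso
      have hv' : p^[b - a - 1] v = u₂' := by
        have hiter := Function.iterate_succ_apply p (b - a - 1) u₁'
        rw [Nat.succ_eq_add_one, show b - a - 1 + 1 = b - a by omega] at hiter
        rw [← hpu₁', ← hiter, hb']
      rcases Nat.eq_zero_or_pos (b - a - 1) with hc1 | hc1
      · rw [hc1] at hv'
        simp at hv'
        have := (hp u₂' h2u₂' hu₂n').2
        omega
      · have := iter_lt hp hp0 hp1 (b - a - 1) v h1v hvn hc1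
        rw [hv'] at this
        have := (hp u₂' h2u₂' hu₂n').2
        omega
  have getIter : ∀ u' : ℕ, w ∈ subtreeF n p u' → ∃ a : ℕ, p^[a] w = u' := by
    intro u' hmem
    rcases mem_subtreeF.mp hmem with h | ⟨_, ⟨j, _, hj⟩⟩
    · exact ⟨0, by simp [h]⟩
    · exact ⟨j, hj⟩
  obtain ⟨a, ha⟩ := getIter u₁ hw₁
  obtain ⟨b, hb⟩ := getIter u₂ hw₂
  rcases le_total a b with hab | hab
  · exact key a b u₁ u₂ hab ha hb h2u₁ hu₁n hpu₁ h2u₂ hu₂n hpu₂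
  · exact (key b a u₂ u₁ hab hb ha h2u₂ hu₂n hpu₂ h2u₁ hu₁n hpu₁).symm

lemma descSet_decomp {v : ℕ} (h1v : 1 ≤ v) (hvn : v ≤ n) :
    descSet n p v = (childrenF n p v).biUnion (subtreeF n p) := by
  ext w
  constructor
  · intro hw
    obtain ⟨⟨h1w, hwn⟩, hdw⟩ := mem_descSet.mp hw
    obtain ⟨u, huC, huS⟩ := child_step hp hp0 hp1 h1v hdw h1w hwn
    exact Finset.mem_biUnion.mpr ⟨u, huC, huS⟩
  · intro hw
    obtain ⟨u, huC, huS⟩ := Finset.mem_biUnion.mp hw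
    obtain ⟨⟨h2u, hun⟩, hpu⟩ := mem_childrenF.mp huC
    have hdu : descends p u v := descends_child hpu
    rcases mem_subtreeF.mp huS with h | ⟨⟨h1w, hwn⟩, hdw⟩
    · subst h
      exact mem_descSet.mpr ⟨⟨by omega, hun⟩, hdu⟩
    · exact mem_descSet.mpr ⟨⟨h1w, hwn⟩, descends_trans hdw hdu⟩

lemma children_pairwiseDisjoint {v : ℕ} (h1v : 1 ≤ v) (hvn : v ≤ n) :
    Set.PairwiseDisjoint (↑(childrenF n p v)) (subtreeF n p) := by
  intro u₁ hu₁ u₂ hu₂ hne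
  rw [Function.onFun]
  rw [Finset.disjoint_left]
  intro w hw₁ hw₂
  have h1w : 1 ≤ w := by
    rcases mem_subtreeF.mp hw₁ with h | ⟨⟨h1, _⟩, _⟩
    · obtain ⟨⟨h2u, _⟩, _⟩ := mem_childrenF.mp hu₁; omega
    · exact h1
  have hwn : w ≤ n := by
    rcases mem_subtreeF.mp hw₁ with h | ⟨⟨_, h2⟩, _⟩
    · obtain ⟨⟨_, hun⟩, _⟩ := mem_childrenF.mp hu₁; omega
    · exact h2
  exact hne (anc_unique hp hp0 hp1 h1v hvn hu₁ hu₂ hw₁ hw₂ h1w hwn)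

lemma sum_subtree_decomp {v : ℕ} (h1v : 1 ≤ v) (hvn : v ≤ n) (f : ℕ → ℝ) :
    ∑ w ∈ subtreeF n p v, f w
      = f v + ∑ u ∈ childrenF n p v, ∑ w ∈ subtreeF n p u, f w := by
  have hvnot : v ∉ descSet n p v := by
    intro h
    obtain ⟨⟨h1, h2⟩, hd⟩ := mem_descSet.mp h
    have := descends_lt hp hp0 hp1 hd h1 h2
    omega
  rw [subtreeF, Finset.sum_insert hvnot, descSet_decomp hp hp0 hp1 h1v hvn,
    Finset.sum_biUnion (children_pairwiseDisjoint hp hp0 hp1 h1v hvn)]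

end Tree

section Wmax

variable {n : ℕ} {p : ℕ → ℕ}

lemma wmax_eq (v : ℕ) : wmax n p v = (subtreeF n p v).max' (Finset.insert_nonempty _ _) := rfl

lemma wmax_mem (v : ℕ) : wmax n p v ∈ subtreeF n p v := Finset.max'_mem _ _

lemma le_wmax {v w : ℕ} (h : w ∈ subtreeF n p v) : w ≤ wmax n p v := Finset.le_max' _ _ h

lemma self_le_wmax (v : ℕ) : v ≤ wmax n p v := le_wmax (Finset.mem_insert_self _ _)

lemma wmax_le_n {v : ℕ} (hvn : v ≤ n) : wmax n p v ≤ n := by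
  rcases mem_subtreeF.mp (wmax_mem (p := p) (n := n) v) with h | ⟨⟨_, h2⟩, _⟩
  · omega
  · exact h2

end Wmax

section Wmax2

variable {n : ℕ} {p : ℕ → ℕ}
variable (hp : ∀ v, 2 ≤ v → v ≤ n → 1 ≤ p v ∧ p v < v) (hp0 : p 0 = 0) (hp1 : p 1 = 0)

include hp hp0 hp1

lemma child_subtree_subset {v u : ℕ} (h1v : 1 ≤ v) (hvn : v ≤ n)
    (hu : u ∈ childrenF n p v) : subtreeF n p u ⊆ descSet n p v := by
  intro w hw
  rw [descSet_decomp hp hp0 hp1 h1v hvn]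
  exact Finset.mem_biUnion.mpr ⟨u, hu, hw⟩

lemma child_subtree_subset' {v u : ℕ} (h1v : 1 ≤ v) (hvn : v ≤ n)
    (hu : u ∈ childrenF n p v) : subtreeF n p u ⊆ subtreeF n p v := by
  intro w hw
  exact Finset.mem_insert_of_mem (child_subtree_subset hp hp0 hp1 h1v hvn hu hw)

lemma wmax_child_le {v u : ℕ} (h1v : 1 ≤ v) (hvn : v ≤ n)
    (hu : u ∈ childrenF n p v) : wmax n p u ≤ wmax n p v :=
  le_wmax (child_subtree_subset' hp hp0 hp1 h1v hvn hu (wmax_mem u))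

lemma wmax_cases {v : ℕ} (h1v : 1 ≤ v) (hvn : v ≤ n) :
    wmax n p v = v ∨ ∃ u ∈ childrenF n p v, wmax n p v = wmax n p u := by
  have hmem := wmax_mem (n := n) (p := p) v
  rw [subtreeF, Finset.mem_insert] at hmem
  rcases hmem with h | h
  · exact Or.inl h
  · rw [descSet_decomp hp hp0 hp1 h1v hvn] at h
    obtain ⟨u, huC, huS⟩ := Finset.mem_biUnion.mp h
    refine Or.inr ⟨u, huC, le_antisymm (le_wmax huS) (wmax_child_le hp hp0 hp1 h1v hvn huC)⟩

lemma descends_of_mem_subtree_child {v u w : ℕ} (h1v : 1 ≤ v) (hvn : v ≤ n)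
    (hu : u ∈ childrenF n p v) (hw : w ∈ subtreeF n p u) : descends p w v :=
  (mem_descSet.mp (child_subtree_subset hp hp0 hp1 h1v hvn hu hw)).2

lemma wmax_isLeaf {v : ℕ} (h1v : 1 ≤ v) (hvn : v ≤ n) : IsLeaf n p (wmax n p v) := by
  rintro ⟨w, hw2, hwn, hpw⟩
  have hwlt := (hp w hw2 hwn).2
  have hdwM : descends p w (wmax n p v) := descends_child hpw
  have hdwv : descends p w v := by
    rcases mem_subtreeF.mp (wmax_mem (n := n) (p := p) v) with h | ⟨_, hd⟩
    · rwa [h] at hdwM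
    · exact descends_trans hdwM hd
  have : w ∈ subtreeF n p v := mem_subtreeF.mpr (Or.inr ⟨⟨by omega, hwn⟩, hdwv⟩)
  have := le_wmax this
  omega

lemma descends_to_root : ∀ w, 2 ≤ w → w ≤ n → descends p w 1 := by
  intro w
  induction w using Nat.strong_induction_on with
  | _ w ih =>
    intro hw2 hwn
    obtain ⟨hp1w, hpww⟩ := hp w hw2 hwn
    rcases Nat.lt_or_ge (p w) 2 with h | h
    · have : p w = 1 := by omega
      exact descends_child this
    · exact descends_trans (descends_child rfl) (ih (p w) hpww h (by omega))

lemma root_subtree (hn : 1 ≤ n) : subtreeF n p 1 = Finset.Icc 1 n := by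
  ext w
  rw [mem_subtreeF, Finset.mem_Icc]
  constructor
  · rintro (h | ⟨⟨h1, h2⟩, _⟩)
    · omega
    · exact ⟨h1, h2⟩
  · rintro ⟨h1, h2⟩
    rcases Nat.lt_or_ge w 2 with h | h
    · left; omega
    · exact Or.inr ⟨⟨h1, h2⟩, descends_to_root hp hp0 hp1 w h h2⟩

lemma wmax_root (hn : 1 ≤ n) : wmax n p 1 = n := by
  refine le_antisymm (wmax_le_n hn) ?_
  refine le_wmax ?_
  rw [root_subtree hp hp0 hp1 hn, Finset.mem_Icc]
  omega

end Wmax2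

/-! ### Real arithmetic helpers -/

/-- Per-vertex error bound. -/
noncomputable def errF (n : ℕ) (k : ℕ → ℤ) (w : ℕ) : ℝ :=
  if k w = 0 then 5 / 2 else (2 : ℝ) ^ (|k n| - 1) / (2 * n)

lemma errF_nonneg (n : ℕ) (k : ℕ → ℤ) (w : ℕ) : 0 ≤ errF n k w := by
  unfold errF
  split <;> positivity

lemma log_ineq_pow {n : ℕ} (hn : 1 ≤ n) {a b : ℤ}
    (h : ((a : ℤ) : ℝ) ≤ ((b : ℤ) : ℝ) - Real.logb 2 10 - Real.logb 2 n) :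
    10 * (n : ℝ) * (2 : ℝ) ^ a ≤ (2 : ℝ) ^ b := by
  have hn' : (1 : ℝ) ≤ (n : ℝ) := by exact_mod_cast hn
  have h10 : (2 : ℝ) ^ (Real.logb 2 10) = 10 :=
    Real.rpow_logb (by norm_num) (by norm_num) (by norm_num)
  have hnn : (2 : ℝ) ^ (Real.logb 2 (n : ℝ)) = (n : ℝ) :=
    Real.rpow_logb (by norm_num) (by norm_num) (by linarith)
  have key : (2 : ℝ) ^ ((a : ℝ) + Real.logb 2 10 + Real.logb 2 (n : ℝ))
      ≤ (2 : ℝ) ^ ((b : ℝ)) :=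
    Real.rpow_le_rpow_of_exponent_le one_le_two (by linarith)
  rw [Real.rpow_add (by norm_num), Real.rpow_add (by norm_num), h10, hnn,
    Real.rpow_intCast, Real.rpow_intCast] at key
  linarith [key]

lemma log_ineq_small {n : ℕ} (hn : 1 ≤ n) {a b : ℤ}
    (h : ((a : ℤ) : ℝ) ≤ ((b : ℤ) : ℝ) - Real.logb 2 10 - Real.logb 2 n) :
    5 * (2 : ℝ) ^ (a - 1) ≤ (2 : ℝ) ^ (b - 1) / (2 * n) := by
  have hn' : (1 : ℝ) ≤ (n : ℝ) := by exact_mod_cast hn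
  have key := log_ineq_pow hn h
  have ea : (2 : ℝ) ^ (a - 1) = 2 ^ a / 2 := by
    rw [zpow_sub₀ (two_ne_zero), zpow_one]
  have eb : (2 : ℝ) ^ (b - 1) = 2 ^ b / 2 := by
    rw [zpow_sub₀ (two_ne_zero), zpow_one]
  rw [ea, eb, le_div_iff₀ (by positivity)]
  have hpa : (0 : ℝ) < 2 ^ a := zpow_pos (by norm_num) a
  nlinarith [key, hpa]

lemma le_logb_of_zpow_le {x : ℤ} {y : ℝ} (hy : 0 < y) (h : (2 : ℝ) ^ x ≤ y) :
    (x : ℝ) ≤ Real.logb 2 y := by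
  have h1 : ((x : ℝ)) = Real.logb 2 ((2 : ℝ) ^ (x : ℝ)) :=
    (Real.logb_rpow (by norm_num) (by norm_num)).symm
  rw [h1]
  apply Real.logb_le_logb_of_le one_lt_two (by positivity)
  rwa [Real.rpow_intCast]

/-! ### The main tree estimate -/

lemma tree_est (n : ℕ) (hn : 1 ≤ n) (p : ℕ → ℕ)
    (hp : ∀ v, 2 ≤ v → v ≤ n → 1 ≤ p v ∧ p v < v) (hp0 : p 0 = 0) (hp1 : p 1 = 0)
    (k : ℕ → ℤ)
    (hki : ∀ v w, 1 ≤ v → v < w → w ≤ n → |k v| ≤ |k w|)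
    (hkii : ∀ v w, 1 ≤ v → v ≤ n → 1 ≤ w → w ≤ n → (w = v ∨ descends p w v) →
      IsLeaf n p w → k w * k v < 0 →
      ((|k v| : ℤ) : ℝ) ≤ ((|k w| : ℤ) : ℝ) - Real.logb 2 10 - Real.logb 2 n)
    (hkiii : ∀ m, 1 ≤ m → m ≤ n → IsNode n p m → ∀ v, 2 ≤ v → v ≤ n → p v = m →
      k (wmax n p v) * k (wmax n p m) < 0 →
      ((|k (wmax n p v)| : ℤ) : ℝ) ≤ ((|k (wmax n p m)| : ℤ) : ℝ)
        - Real.logb 2 10 - Real.logb 2 n)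
    (ξ : ℕ → ℝ)
    (hξsign : ∀ v, 1 ≤ v → v ≤ n → 0 ≤ (k v : ℝ) * ξ v)
    (hξmag : ∀ v, 1 ≤ v → v ≤ n →
      (2 : ℝ) ^ (|k v| - 1) < |ξ v| ∧ |ξ v| < 5 * (2 : ℝ) ^ (|k v| - 1)) :
    ∀ d v, 1 ≤ v → v ≤ n → n - v ≤ d → k (wmax n p v) ≠ 0 →
      (2 : ℝ) ^ (|k (wmax n p v)| - 1) - ∑ w ∈ subtreeF n p v, errF n k w
        ≤ (if 0 < k (wmax n p v) then (1 : ℝ) else -1) * ∑ w ∈ subtreeF n p v, ξ w := by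
  intro d
  induction d using Nat.strong_induction_on with
  | _ d ih =>
  intro v h1v hvn hdv hM0
  have hnR : (1 : ℝ) ≤ (n : ℝ) := by exact_mod_cast hn
  have h2n0 : (0 : ℝ) < 2 * n := by linarith
  have hkiLe : ∀ a b, 1 ≤ a → a ≤ b → b ≤ n → |k a| ≤ |k b| := by
    intro a b ha hab hbn
    rcases eq_or_lt_of_le hab with h | h
    · rw [h]
    · exact hki a b ha h hbn
  set M := wmax n p v with hMdef
  have hvM : v ≤ M := self_le_wmax v
  have hMn : M ≤ n := wmax_le_n hvn
  have h1M : 1 ≤ M := le_trans h1v hvM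
  have hMtop : |k M| ≤ |k n| := hkiLe M n h1M hMn le_rfl
  have hlog10 : 0 < Real.logb 2 10 := Real.logb_pos one_lt_two (by norm_num)
  have hlogn : 0 ≤ Real.logb 2 (n : ℝ) := Real.logb_nonneg one_lt_two hnR
  have h3 : (2 : ℝ) ^ (|k M| - 1) / (2 * n) ≤ (2 : ℝ) ^ (|k n| - 1) / (2 * n) :=
    (div_le_div_iff_of_pos_right h2n0).mpr (zpow_le_zpow_right₀ one_le_two (by omega))
  set ε : ℝ := if 0 < k M then (1 : ℝ) else -1 with hεdef
  have hεabs : |ε| = 1 := by rw [hεdef]; split <;> norm_num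
  have hεmul : ∀ x : ℝ, -|x| ≤ ε * x := by
    intro x
    calc -|x| = -|ε * x| := by rw [abs_mul, hεabs, one_mul]
    _ ≤ ε * x := neg_abs_le _
  -- subtrees all of whose frequencies are (log-)small compared to `k M`
  have subtree_small : ∀ u ∈ childrenF n p v,
      ((|k (wmax n p u)| : ℤ) : ℝ) ≤ ((|k M| : ℤ) : ℝ) - Real.logb 2 10 - Real.logb 2 n →
      -(∑ w ∈ subtreeF n p u, errF n k w) ≤ ε * ∑ w ∈ subtreeF n p u, ξ w := by
    intro u huC hsmall
    obtain ⟨⟨hu2, hun⟩, hpu⟩ := mem_childrenF.mp huC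
    have hptwise : ∀ w ∈ subtreeF n p u, |ξ w| ≤ errF n k w := by
      intro w hw
      have hw1n : 1 ≤ w ∧ w ≤ n := by
        rcases mem_subtreeF.mp hw with h | ⟨hb, _⟩
        · subst h; exact ⟨by omega, hun⟩
        · exact hb
      have hkw : |k w| ≤ |k (wmax n p u)| :=
        hkiLe w (wmax n p u) hw1n.1 (le_wmax hw) (wmax_le_n hun)
      have hmag := (hξmag w hw1n.1 hw1n.2).2
      unfold errF
      split_ifs with hkw0
      · rw [hkw0, abs_zero] at hmag
        norm_num at hmag
        linarith
      · have h1 : (2 : ℝ) ^ (|k w| - 1) ≤ 2 ^ (|k (wmax n p u)| - 1) :=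
          zpow_le_zpow_right₀ one_le_two (by omega)
        have h2 := log_ineq_small hn hsmall
        linarith
    have habs : |∑ w ∈ subtreeF n p u, ξ w| ≤ ∑ w ∈ subtreeF n p u, errF n k w :=
      le_trans (Finset.abs_sum_le_sum_abs _ _) (Finset.sum_le_sum hptwise)
    have := hεmul (∑ w ∈ subtreeF n p u, ξ w)
    linarith
  -- children whose top frequency has the same sign (or is zero)
  have child_pos : ∀ u ∈ childrenF n p v, 0 ≤ k (wmax n p u) * k M →
      -(∑ w ∈ subtreeF n p u, errF n k w) ≤ ε * ∑ w ∈ subtreeF n p u, ξ w := by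
    intro u huC hprod
    obtain ⟨⟨hu2, hun⟩, hpu⟩ := mem_childrenF.mp huC
    have hvu : v < u := by have := (hp u hu2 hun).2; omega
    rcases eq_or_ne (k (wmax n p u)) 0 with h0 | h0
    · have hptwise : ∀ w ∈ subtreeF n p u, |ξ w| ≤ errF n k w := by
        intro w hw
        have hw1n : 1 ≤ w ∧ w ≤ n := by
          rcases mem_subtreeF.mp hw with h | ⟨hb, _⟩
          · subst h; exact ⟨by omega, hun⟩
          · exact hb
        have hkw : |k w| ≤ |k (wmax n p u)| :=
          hkiLe w (wmax n p u) hw1n.1 (le_wmax hw) (wmax_le_n hun)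
        have hkw0 : k w = 0 := by
          rw [h0, abs_zero] at hkw
          exact abs_nonpos_iff.mp hkw
        have hmag := (hξmag w hw1n.1 hw1n.2).2
        rw [hkw0, abs_zero] at hmag
        norm_num at hmag
        unfold errF
        rw [if_pos hkw0]
        linarith
      have habs : |∑ w ∈ subtreeF n p u, ξ w| ≤ ∑ w ∈ subtreeF n p u, errF n k w :=
        le_trans (Finset.abs_sum_le_sum_abs _ _) (Finset.sum_le_sum hptwise)
      have := hεmul (∑ w ∈ subtreeF n p u, ξ w)
      linarith
    · have hprodpos : 0 < k (wmax n p u) * k M :=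
        lt_of_le_of_ne hprod (Ne.symm (mul_ne_zero h0 hM0))
      have hsame : (0 < k (wmax n p u)) ↔ (0 < k M) := by
        rcases mul_pos_iff.mp hprodpos with ⟨ha, hb⟩ | ⟨ha, hb⟩
        · exact iff_of_true ha hb
        · exact iff_of_false (by omega) (by omega)
      have hIH := ih (n - u) (by omega) u (by omega) hun le_rfl h0
      have hεu : (if 0 < k (wmax n p u) then (1 : ℝ) else -1) = ε := by
        rw [hεdef]
        by_cases h : 0 < k M
        · rw [if_pos h, if_pos (hsame.mpr h)]
        · rw [if_neg h, if_neg (fun hh => h (hsame.mp hh))]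
      rw [hεu] at hIH
      have hpow : (0 : ℝ) < 2 ^ (|k (wmax n p u)| - 1) := zpow_pos (by norm_num) _
      linarith
  -- the contribution of `ξ v` itself
  have hxv : -(errF n k v) ≤ ε * ξ v := by
    have hsign := hξsign v h1v hvn
    have hmagv := hξmag v h1v hvn
    rcases lt_trichotomy (k v * k M) 0 with hneg | hzero | hpos
    · have hkv0 : k v ≠ 0 := by
        intro h; rw [h] at hneg; simp at hneg
      have hMdesc : M = v ∨ descends p M v := by
        rcases mem_subtreeF.mp (wmax_mem (n := n) (p := p) v) with h | ⟨_, hd⟩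
        · exact Or.inl h
        · exact Or.inr hd
      have hleaf : IsLeaf n p M := wmax_isLeaf hp hp0 hp1 h1v hvn
      have hneg' : k M * k v < 0 := by rw [mul_comm] at hneg; exact hneg
      have hii := hkii v M h1v hvn h1M hMn hMdesc hleaf hneg'
      have hsmall := log_ineq_small hn hii
      unfold errF
      rw [if_neg hkv0]
      have := hεmul (ξ v)
      linarith [hmagv.2]
    · have hkv0 : k v = 0 := by
        rcases mul_eq_zero.mp hzero with h | h
        · exact h
        · exact absurd h hM0
      unfold errF
      rw [if_pos hkv0]
      have hmag := hmagv.2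
      rw [hkv0, abs_zero] at hmag
      norm_num at hmag
      have := hεmul (ξ v)
      linarith
    · have h0 : 0 ≤ ε * ξ v := by
        rcases mul_pos_iff.mp hpos with ⟨ha, hb⟩ | ⟨ha, hb⟩
        · rw [hεdef, if_pos hb, one_mul]
          by_contra hc
          push_neg at hc
          have hka : (0 : ℝ) < (k v : ℝ) := by exact_mod_cast ha
          nlinarith
        · rw [hεdef, if_neg (by omega), neg_one_mul]
          have hka : ((k v : ℝ)) < 0 := by exact_mod_cast ha
          nlinarith
      linarith [errF_nonneg n k v]
  have hSdec := sum_subtree_decomp hp hp0 hp1 h1v hvn ξ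
  have hEdec := sum_subtree_decomp hp hp0 hp1 h1v hvn (errF n k)
  rcases wmax_cases hp hp0 hp1 h1v hvn with hcase | ⟨u₀, hu₀C, hMu₀⟩
  · -- Case B : the maximum is `v` itself
    rw [← hMdef] at hcase
    have hmain : (2 : ℝ) ^ (|k M| - 1) ≤ ε * ξ v := by
      have hsign := hξsign v h1v hvn
      have h1 := (hξmag v h1v hvn).1
      have hv_eq : k M = k v := by rw [hcase]
      have heq : ε * ξ v = |ξ v| := by
        rw [hεdef, hv_eq]
        rcases lt_trichotomy (k v) 0 with h | h | h
        · rw [if_neg (by omega), neg_one_mul, abs_of_nonpos]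
          have hka : ((k v : ℝ)) < 0 := by exact_mod_cast h
          nlinarith
        · exact absurd (hv_eq.trans h) hM0
        · rw [if_pos h, one_mul, abs_of_nonneg]
          have hka : (0 : ℝ) < (k v : ℝ) := by exact_mod_cast h
          nlinarith
      rw [heq, hcase]
      linarith
    have hchild : ∀ u ∈ childrenF n p v,
        -(∑ w ∈ subtreeF n p u, errF n k w) ≤ ε * ∑ w ∈ subtreeF n p u, ξ w := by
      intro u huC
      rcases le_or_gt 0 (k (wmax n p u) * k M) with h | h
      · exact child_pos u huC h
      · exfalso
        obtain ⟨⟨hu2, hun⟩, hpu⟩ := mem_childrenF.mp huC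
        have hMu_leaf : IsLeaf n p (wmax n p u) := wmax_isLeaf hp hp0 hp1 (by omega) hun
        have hdesc : descends p (wmax n p u) v :=
          descends_of_mem_subtree_child hp hp0 hp1 h1v hvn huC (wmax_mem u)
        have hneg' : k (wmax n p u) * k v < 0 := by rw [← hcase]; exact h
        have hii := hkii v (wmax n p u) h1v hvn (le_trans (by omega) (self_le_wmax u))
          (wmax_le_n hun) (Or.inr hdesc) hMu_leaf hneg'
        have hwuv : wmax n p u ≤ v := by
          have := wmax_child_le hp hp0 hp1 h1v hvn huC
          omega
        have hle : |k (wmax n p u)| ≤ |k v| :=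
          hkiLe _ v (le_trans (by omega) (self_le_wmax u)) hwuv hvn
        have hcast : ((|k (wmax n p u)| : ℤ) : ℝ) ≤ ((|k v| : ℤ) : ℝ) := by exact_mod_cast hle
        linarith
    rw [hSdec, hEdec, mul_add, Finset.mul_sum]
    have hsum : ∑ u ∈ childrenF n p v, -(∑ w ∈ subtreeF n p u, errF n k w)
        ≤ ∑ u ∈ childrenF n p v, ε * ∑ w ∈ subtreeF n p u, ξ w := Finset.sum_le_sum hchild
    rw [Finset.sum_neg_distrib] at hsum
    linarith [errF_nonneg n k v]
  · -- Case A : the maximum comes from the child `u₀`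
    rw [← hMdef] at hMu₀
    obtain ⟨⟨hu₀2, hu₀n⟩, hpu₀⟩ := mem_childrenF.mp hu₀C
    have hvu₀ : v < u₀ := by have := (hp u₀ hu₀2 hu₀n).2; omega
    have hIH0 := ih (n - u₀) (by omega) u₀ (by omega) hu₀n le_rfl (by rw [← hMu₀]; exact hM0)
    rw [← hMu₀] at hIH0
    have hchild' : ∀ u ∈ (childrenF n p v).erase u₀,
        -(∑ w ∈ subtreeF n p u, errF n k w) ≤ ε * ∑ w ∈ subtreeF n p u, ξ w := by
      intro u huE
      obtain ⟨hne, huC⟩ := Finset.mem_erase.mp huE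
      rcases le_or_gt 0 (k (wmax n p u) * k M) with h | h
      · exact child_pos u huC h
      · obtain ⟨⟨hu2, hun⟩, hpu⟩ := mem_childrenF.mp huC
        have hnode : IsNode n p v := ⟨u, u₀, hne, hu2, hun, hpu, hu₀2, hu₀n, hpu₀⟩
        rw [hMdef] at h
        have hiii := hkiii v h1v hvn hnode u hu2 hun hpu h
        rw [← hMdef] at hiii
        exact subtree_small u huC hiii
    rw [hSdec, hEdec, mul_add, Finset.mul_sum,
      ← Finset.add_sum_erase _ (fun u => ∑ w ∈ subtreeF n p u, errF n k w) hu₀C,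
      ← Finset.add_sum_erase _ (fun u => ε * ∑ w ∈ subtreeF n p u, ξ w) hu₀C]
    have hsum : ∑ u ∈ (childrenF n p v).erase u₀, -(∑ w ∈ subtreeF n p u, errF n k w)
        ≤ ∑ u ∈ (childrenF n p v).erase u₀, ε * ∑ w ∈ subtreeF n p u, ξ w :=
      Finset.sum_le_sum hchild'
    rw [Finset.sum_neg_distrib] at hsum
    linarith

/-- **Frequency localization of the total frequency**: if moreover the total frequency
`ξ₁ + ⋯ + ξₙ` is dyadically localized at scale `K`, then `|K|` differs from
`|k_{w_max(1)}|` by at most `log₂(10 n)`. -/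
theorem total_frequency_localization
    (n : ℕ) (hn : 1 ≤ n) (p : ℕ → ℕ)
    (hp : ∀ v, 2 ≤ v → v ≤ n → 1 ≤ p v ∧ p v < v) (hp0 : p 0 = 0) (hp1 : p 1 = 0)
    (k : ℕ → ℤ)
    -- (i)
    (hki : ∀ v w, 1 ≤ v → v < w → w ≤ n → |k v| ≤ |k w|)
    -- (ii)
    (hkii : ∀ v w, 1 ≤ v → v ≤ n → 1 ≤ w → w ≤ n → (w = v ∨ descends p w v) →
      IsLeaf n p w → k w * k v < 0 →
      ((|k v| : ℤ) : ℝ) ≤ ((|k w| : ℤ) : ℝ) - Real.logb 2 10 - Real.logb 2 n)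
    -- (iii)
    (hkiii : ∀ m, 1 ≤ m → m ≤ n → IsNode n p m → ∀ v, 2 ≤ v → v ≤ n → p v = m →
      k (wmax n p v) * k (wmax n p m) < 0 →
      ((|k (wmax n p v)| : ℤ) : ℝ) ≤ ((|k (wmax n p m)| : ℤ) : ℝ)
        - Real.logb 2 10 - Real.logb 2 n)
    (ξ : ℕ → ℝ)
    (hξsign : ∀ v, 1 ≤ v → v ≤ n → 0 ≤ (k v : ℝ) * ξ v)
    (hξmag : ∀ v, 1 ≤ v → v ≤ n →
      (2 : ℝ) ^ (|k v| - 1) < |ξ v| ∧ |ξ v| < 5 * (2 : ℝ) ^ (|k v| - 1))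
    (K : ℤ)
    (hK : (2 : ℝ) ^ (|K| - 1) < |∑ v ∈ Finset.Icc 1 n, ξ v| ∧
      |∑ v ∈ Finset.Icc 1 n, ξ v| < 5 * (2 : ℝ) ^ (|K| - 1)) :
    ((|(|K| - |k (wmax n p 1)|)| : ℤ) : ℝ) ≤ Real.logb 2 (10 * (n : ℝ)) := by
  obtain ⟨hK1, hK2⟩ := hK
  have hnR : (1 : ℝ) ≤ (n : ℝ) := by exact_mod_cast hn
  have h10n : (0 : ℝ) < 10 * (n : ℝ) := by linarith
  have hw1 : wmax n p 1 = n := wmax_root hp hp0 hp1 hn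
  have hroot : subtreeF n p 1 = Finset.Icc 1 n := root_subtree hp hp0 hp1 hn
  rw [hw1]
  have hkiLe : ∀ a b, 1 ≤ a → a ≤ b → b ≤ n → |k a| ≤ |k b| := by
    intro a b ha hab hbn
    rcases eq_or_lt_of_le hab with h | h
    · rw [h]
    · exact hki a b ha h hbn
  have hKpos : (0 : ℝ) < 2 ^ (|K| : ℤ) := zpow_pos (by norm_num) _
  have hApos : (0 : ℝ) < 2 ^ (|k n| : ℤ) := zpow_pos (by norm_num) _
  have eK : (2 : ℝ) ^ (|K| - 1) = 2 ^ (|K| : ℤ) / 2 := by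
    rw [zpow_sub₀ two_ne_zero, zpow_one]
  have eA : (2 : ℝ) ^ (|k n| - 1) = 2 ^ (|k n| : ℤ) / 2 := by
    rw [zpow_sub₀ two_ne_zero, zpow_one]
  -- Direction 1 : |K| ≤ |k n| + log₂(10 n)
  have hpow1 : (2 : ℝ) ^ (|K| - |k n|) ≤ 10 * (n : ℝ) := by
    have hub : |∑ v ∈ Finset.Icc 1 n, ξ v| ≤ (n : ℝ) * (5 * 2 ^ (|k n| - 1)) := by
      calc |∑ v ∈ Finset.Icc 1 n, ξ v| ≤ ∑ v ∈ Finset.Icc 1 n, |ξ v| :=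
            Finset.abs_sum_le_sum_abs _ _
      _ ≤ ∑ _v ∈ Finset.Icc 1 n, (5 * (2 : ℝ) ^ (|k n| - 1)) := by
            apply Finset.sum_le_sum
            intro w hw
            obtain ⟨h1w, hwn⟩ := Finset.mem_Icc.mp hw
            have h1 := (hξmag w h1w hwn).2
            have h2 : (2 : ℝ) ^ (|k w| - 1) ≤ 2 ^ (|k n| - 1) :=
              zpow_le_zpow_right₀ one_le_two (by have := hkiLe w n h1w hwn le_rfl; omega)
            linarith
      _ = (n : ℝ) * (5 * 2 ^ (|k n| - 1)) := by
            rw [Finset.sum_const, Nat.card_Icc]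
            simp [nsmul_eq_mul]
    rw [zpow_sub₀ two_ne_zero, div_le_iff₀ hApos]
    rw [eK] at hK1
    rw [eA] at hub
    nlinarith
  -- Direction 2 : |k n| ≤ |K| + log₂(10 n)
  have hpow2 : (2 : ℝ) ^ (|k n| - |K|) ≤ 10 * (n : ℝ) := by
    by_cases hA0 : k n = 0
    · rw [hA0, abs_zero]
      calc (2 : ℝ) ^ (0 - |K|) ≤ 2 ^ (0 : ℤ) :=
            zpow_le_zpow_right₀ one_le_two (by have := abs_nonneg K; omega)
      _ = 1 := zpow_zero 2
      _ ≤ 10 * (n : ℝ) := by linarith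
    by_cases hbig : (2 : ℝ) ^ (|k n| : ℤ) ≤ 10 * n
    · calc (2 : ℝ) ^ (|k n| - |K|) ≤ 2 ^ (|k n| : ℤ) :=
            zpow_le_zpow_right₀ one_le_two (by have := abs_nonneg K; omega)
      _ ≤ 10 * (n : ℝ) := hbig
    · push_neg at hbig
      have h2n0 : (0 : ℝ) < 2 * (n : ℝ) := by linarith
      have hE : ∑ w ∈ Finset.Icc 1 n, errF n k w ≤ (2 : ℝ) ^ (|k n| - 1) / 2 := by
        have hbound : ∀ w ∈ Finset.Icc 1 n, errF n k w ≤ (2 : ℝ) ^ (|k n| - 1) / (2 * n) := by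
          intro w _
          unfold errF
          split_ifs with h
          · rw [le_div_iff₀ h2n0, eA]
            nlinarith
          · exact le_rfl
        calc ∑ w ∈ Finset.Icc 1 n, errF n k w
            ≤ ∑ _w ∈ Finset.Icc 1 n, ((2 : ℝ) ^ (|k n| - 1) / (2 * n)) :=
              Finset.sum_le_sum hbound
        _ = (n : ℝ) * ((2 : ℝ) ^ (|k n| - 1) / (2 * n)) := by
              rw [Finset.sum_const, Nat.card_Icc]
              simp [nsmul_eq_mul]
        _ = (2 : ℝ) ^ (|k n| - 1) / 2 := by
              field_simp
      have htree := tree_est n hn p hp hp0 hp1 k hki hkii hkiii ξ hξsign hξmag n 1 le_rfl hn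
        (by omega) (by rw [hw1]; exact hA0)
      rw [hw1, hroot] at htree
      have habs : (if 0 < k n then (1 : ℝ) else -1) * ∑ v ∈ Finset.Icc 1 n, ξ v
          ≤ |∑ v ∈ Finset.Icc 1 n, ξ v| := by
        split_ifs
        · rw [one_mul]; exact le_abs_self _
        · rw [neg_one_mul]; exact neg_le_abs _
      rw [zpow_sub₀ two_ne_zero, div_le_iff₀ hKpos]
      rw [eK] at hK2
      rw [eA] at htree hE
      nlinarith
  have h1 := le_logb_of_zpow_le h10n hpow1
  have h2 := le_logb_of_zpow_le h10n hpow2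
  rw [Int.cast_abs, abs_le]
  push_cast at h1 h2 ⊢
  constructor <;> linarith
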